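/- arXiv:1103.3570 — 9 statements merged into one kernel-verified Lean document; each statement's English description precedes it below -/
import Mathlib

section
/- A connected graph G of order n has metric dimension n−1 if and only if G is the complete graph K_n. -/
open SimpleGraph Finset

variable {V : Type*}

/-- A finite set `W` of vertices resolves `G` if distinct vertices have
distinct vectors of distances to the vertices of `W`. -/
def SimpleGraph.IsResolvingSet (G : SimpleGraph V) (W : Finset V) : Prop :=
  ∀ u v : V, (∀ w ∈ W, G.dist u w = G.dist v w) → u = v

/-- The metric dimension of `G`: the minimum cardinality of a resolving set. -/
noncomputable def SimpleGraph.metricDim (G : SimpleGraph V) [Fintype V] : ℕ :=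
  sInf {k | ∃ W : Finset V, W.card = k ∧ G.IsResolvingSet W}

/-- `G` is randomly `k`-dimensional: `G` is connected, has metric dimension `k`,
and every `k`-subset of vertices is a (minimum) resolving set, i.e. a basis. -/
def SimpleGraph.RandomlyKDim (G : SimpleGraph V) [Fintype V] (k : ℕ) : Prop :=
  G.Connected ∧ G.metricDim = k ∧ ∀ W : Finset V, W.card = k → G.IsResolvingSet W

/-- The resolving number of `G`: the minimum `k` such that every `k`-subset of
vertices is a resolving set. -/
noncomputable def SimpleGraph.resolvingNumber (G : SimpleGraph V) [Fintype V] : ℕ :=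
  sInf {k | ∀ W : Finset V, W.card = k → G.IsResolvingSet W}

/-!
A vertex of a resolving set is told apart from every other vertex by its own zero distance, so
`W` resolves a connected graph as soon as the vertices outside `W` are pairwise separated by `W`.
Hence `V` minus one vertex always resolves, giving `β(G) ≤ n - 1`. In `K_n` two vertices outside
`W` are at distance `1` from all of `W`, so `β(K_n) = n - 1`. A connected graph other than `K_n`
contains an induced path `u - w - v`; then `v` separates `u` from `w`, so `V ∖ {u, w}` resolves and
`β(G) ≤ n - 2`.
-/

namespace SimpleGraph

variable {G : SimpleGraph V}

theorem metricDim_le_card [Fintype V] {W : Finset V} (hW : G.IsResolvingSet W) :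
    G.metricDim ≤ W.card :=
  Nat.sInf_le (s := {k | ∃ W : Finset V, W.card = k ∧ G.IsResolvingSet W}) ⟨W, rfl, hW⟩

theorem exists_isResolvingSet_card_eq_metricDim [Fintype V] {W : Finset V}
    (hW : G.IsResolvingSet W) :
    ∃ W' : Finset V, W'.card = G.metricDim ∧ G.IsResolvingSet W' :=
  Nat.sInf_mem (s := {k | ∃ W : Finset V, W.card = k ∧ G.IsResolvingSet W})
    ⟨W.card, W, rfl, hW⟩

theorem Connected.isResolvingSet_of_separates (hG : G.Connected) {W : Finset V}
    (h : ∀ x y, x ∉ W → y ∉ W → x ≠ y → ∃ w ∈ W, G.dist x w ≠ G.dist y w) :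
    G.IsResolvingSet W := by
  intro x y hxy
  by_contra hne
  by_cases hx : x ∈ W
  · have := hxy x hx
    rw [dist_self, eq_comm, hG.dist_eq_zero_iff] at this
    exact hne this.symm
  by_cases hy : y ∈ W
  · have := hxy y hy
    rw [dist_self, hG.dist_eq_zero_iff] at this
    exact hne this
  obtain ⟨w, hw, hdist⟩ := h x y hx hy hne
  exact hdist (hxy w hw)

theorem Connected.isResolvingSet_univ_erase [Fintype V] [DecidableEq V] (hG : G.Connected)
    (x : V) : G.IsResolvingSet (univ.erase x) :=
  hG.isResolvingSet_of_separates fun a b ha hb hab => by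
    simp only [mem_erase, mem_univ, and_true, not_not] at ha hb
    exact absurd (ha.trans hb.symm) hab

theorem Connected.isResolvingSet_univ_erase_erase [Fintype V] [DecidableEq V] (hG : G.Connected)
    {u w v : V} (hvu : v ≠ u) (hvw : v ≠ w) (huw : G.dist u v ≠ G.dist w v) :
    G.IsResolvingSet ((univ.erase u).erase w) :=
  hG.isResolvingSet_of_separates fun a b ha hb hab => by
    refine ⟨v, by simp [hvu, hvw], ?_⟩
    simp only [mem_erase, mem_univ, and_true, not_and_or, not_not] at ha hb
    rcases ha with rfl | rfl <;> rcases hb with rfl | rfl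
    all_goals first | exact absurd rfl hab | exact huw | exact huw.symm

theorem card_sub_one_le_of_isResolvingSet_top [Fintype V] {W : Finset V}
    (hW : (⊤ : SimpleGraph V).IsResolvingSet W) : Fintype.card V - 1 ≤ W.card := by
  classical
  by_contra! hlt
  have : 1 < Wᶜ.card := by rw [card_compl]; omega
  obtain ⟨a, ha, b, hb, hab⟩ := one_lt_card.mp this
  rw [mem_compl] at ha hb
  refine hab (hW a b fun w hw => ?_)
  rw [dist_eq_one_iff_adj.mpr ((top_adj _ _).mpr (by rintro rfl; exact ha hw)),
    dist_eq_one_iff_adj.mpr ((top_adj _ _).mpr (by rintro rfl; exact hb hw))]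

theorem metricDim_top [Fintype V] [Nonempty V] :
    (⊤ : SimpleGraph V).metricDim = Fintype.card V - 1 := by
  classical
  obtain ⟨x⟩ := ‹Nonempty V›
  have hres := connected_top.isResolvingSet_univ_erase x
  refine le_antisymm ?_ ?_
  · simpa [card_univ] using metricDim_le_card hres
  · obtain ⟨W, hWcard, hW⟩ := exists_isResolvingSet_card_eq_metricDim hres
    exact hWcard ▸ card_sub_one_le_of_isResolvingSet_top hW

theorem Connected.exists_adj_adj_not_adj_ne_of_ne_top (hG : G.Connected) (h : G ≠ ⊤) :
    ∃ u w v : V, G.Adj u w ∧ G.Adj w v ∧ ¬G.Adj u v ∧ u ≠ v := by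
  obtain ⟨a, b, hab, hnadj⟩ := ne_top_iff_exists_not_adj.mp h
  obtain ⟨p, hp⟩ := (hG a b).exists_walk_length_eq_dist
  exact p.exists_adj_adj_not_adj_ne hp ((hG a b).one_lt_dist_of_ne_of_not_adj hab hnadj)

theorem Connected.metricDim_lt_card_sub_one_of_ne_top [Fintype V] (hG : G.Connected)
    (h : G ≠ ⊤) : G.metricDim < Fintype.card V - 1 := by
  classical
  obtain ⟨u, w, v, huw, hwv, hnuv, huv⟩ := hG.exists_adj_adj_not_adj_ne_of_ne_top h
  have hdist : G.dist u v ≠ G.dist w v := by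
    rw [dist_eq_one_iff_adj.mpr hwv]
    exact mt dist_eq_one_iff_adj.mp hnuv
  have hres := hG.isResolvingSet_univ_erase_erase huv.symm hwv.ne' hdist
  have hcard : 1 < Fintype.card V := Fintype.one_lt_card_iff_nontrivial.mpr ⟨u, w, huw.ne⟩
  calc G.metricDim ≤ ((univ.erase u).erase w).card := metricDim_le_card hres
    _ < Fintype.card V - 1 := by
      rw [card_erase_of_mem (by simp [huw.ne']), card_erase_of_mem (mem_univ u), card_univ]
      omega

end SimpleGraph

theorem stmt2 [Fintype V] (G : SimpleGraph V) (hG : G.Connected) :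
    G.metricDim = Fintype.card V - 1 ↔ G = ⊤ := by
  refine ⟨fun h => ?_, fun h => ?_⟩
  · by_contra hne
    exact (hG.metricDim_lt_card_sub_one_of_ne_top hne).ne h
  · subst h
    have := hG.nonempty
    exact metricDim_top
end

section
/- If G is a randomly k-dimensional graph that is not complete, then for each pair of distinct vertices u, v of G, N(v)\{u} ≠ N(u)\{v}. -/
open SimpleGraph Finset

variable {V : Type*}

/-!
Twins `u`, `v` (with `N(v) \ {u} = N(u) \ {v}`) are at the same distance from every other vertex,
so no resolving set avoids both. A connected non-complete graph contains an induced path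
`x - a - b`, and then all vertices except `x` and `a` resolve it, because `b` separates `x`
from `a`. Hence the metric dimension is at most `n - 2`, and some `k`-subset, i.e. some basis,
avoids both twins.
-/

namespace SimpleGraph

variable {G : SimpleGraph V}

lemma Connected.exists_adj_adj_not_adj_ne_of_ne_top_s3 (hc : G.Connected) (hne : G ≠ ⊤) :
    ∃ x a b : V, G.Adj x a ∧ G.Adj a b ∧ ¬G.Adj x b ∧ x ≠ b := by
  obtain ⟨u, v, huv, hnadj⟩ := ne_top_iff_exists_not_adj.mp hne
  obtain ⟨p, hp⟩ := hc.exists_walk_length_eq_dist u v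
  exact p.exists_adj_adj_not_adj_ne hp ((hc u v).one_lt_dist_of_ne_of_not_adj huv hnadj)

/-- Vertices of `W` are told apart from all others by their distance `0` to themselves. -/
lemma isResolvingSet_of_forall_notMem (hc : G.Connected) {W : Finset V}
    (h : ∀ p q, p ∉ W → q ∉ W → p ≠ q → ∃ w ∈ W, G.dist p w ≠ G.dist q w) :
    G.IsResolvingSet W := by
  intro p q hpq
  have eq_of_mem : ∀ {p q : V}, (∀ w ∈ W, G.dist p w = G.dist q w) → p ∈ W → p = q :=
    fun hpq hp => (hc.dist_eq_zero_iff.mp ((hpq _ hp).symm.trans G.dist_self)).symm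
  by_cases hp : p ∈ W
  · exact eq_of_mem hpq hp
  by_cases hq : q ∈ W
  · exact (eq_of_mem (fun w hw => (hpq w hw).symm) hq).symm
  by_contra hne
  obtain ⟨w, hw, hdist⟩ := h p q hp hq hne
  exact hdist (hpq w hw)

lemma isResolvingSet_univ_sdiff_pair [Fintype V] [DecidableEq V] (hc : G.Connected)
    {x a b : V} (hbx : b ≠ x) (hba : b ≠ a) (hdist : G.dist x b ≠ G.dist a b) :
    G.IsResolvingSet (univ \ {x, a}) := by
  refine isResolvingSet_of_forall_notMem hc fun p q hp hq hpq => ⟨b, by simp [hbx, hba], ?_⟩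
  simp only [mem_sdiff, mem_univ, true_and, not_not, mem_insert, mem_singleton] at hp hq
  rcases hp with rfl | rfl <;> rcases hq with rfl | rfl
  exacts [absurd rfl hpq, hdist, hdist.symm, absurd rfl hpq]

lemma metricDim_le_card_sub_two [Fintype V] (hc : G.Connected) (hne : G ≠ ⊤) :
    G.metricDim ≤ Fintype.card V - 2 := by
  classical
  obtain ⟨x, a, b, hxa, hab, hnxb, hxb⟩ := hc.exists_adj_adj_not_adj_ne_of_ne_top_s3 hne
  have hdist : G.dist x b ≠ G.dist a b := by
    rw [dist_eq_one_iff_adj.mpr hab]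
    exact mt dist_eq_one_iff_adj.mp hnxb
  refine Nat.sInf_le
    ⟨univ \ {x, a}, ?_, isResolvingSet_univ_sdiff_pair hc hxb.symm hab.ne' hdist⟩
  rw [card_univ_sdiff, card_pair hxa.ne]

section Twins

variable {u v : V}

/-- The first step of a geodesic from `u` either lands on `v` or can be taken from `v` instead. -/
lemma dist_le_dist_of_neighborSet_sdiff_eq
    (htwin : G.neighborSet v \ {u} = G.neighborSet u \ {v}) (hc : G.Connected) {w : V}
    (hwu : w ≠ u) :
    G.dist v w ≤ G.dist u w := by
  obtain ⟨p, hp⟩ := hc.exists_walk_length_eq_dist u w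
  cases p with
  | nil => exact absurd rfl hwu.symm
  | @cons _ x _ hux q =>
    rw [← hp, Walk.length_cons]
    by_cases hxv : x = v
    · subst hxv
      exact (G.dist_le q).trans (Nat.le_succ _)
    · have hvx : G.Adj v x := by
        have hx : x ∈ G.neighborSet u \ {v} := ⟨hux, hxv⟩
        rw [← htwin] at hx
        exact hx.1
      simpa using G.dist_le (Walk.cons hvx q)

lemma dist_eq_of_neighborSet_sdiff_eq (htwin : G.neighborSet v \ {u} = G.neighborSet u \ {v})
    (hc : G.Connected) {w : V} (hwu : w ≠ u) (hwv : w ≠ v) :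
    G.dist u w = G.dist v w :=
  le_antisymm (dist_le_dist_of_neighborSet_sdiff_eq htwin.symm hc hwv)
    (dist_le_dist_of_neighborSet_sdiff_eq htwin hc hwu)

lemma IsResolvingSet.mem_or_mem_of_neighborSet_sdiff_eq {W : Finset V} (hW : G.IsResolvingSet W)
    (htwin : G.neighborSet v \ {u} = G.neighborSet u \ {v}) (hc : G.Connected) (huv : u ≠ v) :
    u ∈ W ∨ v ∈ W := by
  by_contra! h
  exact huv (hW u v fun w hw =>
    dist_eq_of_neighborSet_sdiff_eq htwin hc (ne_of_mem_of_not_mem hw h.1)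
      (ne_of_mem_of_not_mem hw h.2))

end Twins

end SimpleGraph

theorem stmt3 [Fintype V] (G : SimpleGraph V) (k : ℕ)
    (hG : G.RandomlyKDim k) (hne : G ≠ ⊤) :
    ∀ u v : V, u ≠ v → G.neighborSet v \ {u} ≠ G.neighborSet u \ {v} := by
  classical
  obtain ⟨hc, rfl, hbasis⟩ := hG
  intro u v huv htwin
  have hcard : #(univ \ {u, v}) = Fintype.card V - 2 := by
    rw [card_univ_sdiff, card_pair huv]
  obtain ⟨W, hWuv, hWcard⟩ :=
    exists_subset_card_eq (hcard ▸ metricDim_le_card_sub_two hc hne)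
  have hWu : u ∉ W := fun hu => by simpa using hWuv hu
  have hWv : v ∉ W := fun hv => by simpa using hWuv hv
  exact ((hbasis W hWcard).mem_or_mem_of_neighborSet_sdiff_eq htwin hc huv).elim hWu hWv
end

section
/- If G is a connected graph with resolving number res(G) = k, then any two distinct vertices of G have at most k−1 common neighbors. -/
open SimpleGraph Finset

variable {V : Type*}

/-! Two distinct vertices have distance `1` to each of their common neighbours, so no set of
common neighbours resolves them; but every set of `res G` vertices does. -/

namespace SimpleGraph

variable (G : SimpleGraph V)

theorem isResolvingSet_of_card_eq_resolvingNumber [Fintype V] {W : Finset V}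
    (hW : W.card = G.resolvingNumber) : G.IsResolvingSet W := by
  have hne : {k | ∀ W : Finset V, W.card = k → G.IsResolvingSet W}.Nonempty :=
    ⟨Fintype.card V + 1, fun W hW => absurd hW (by have := W.card_le_univ; omega)⟩
  exact Nat.sInf_mem hne W hW

theorem not_isResolvingSet_of_subset_commonNeighbors [DecidableEq V] [LocallyFinite G]
    {u v : V} (huv : u ≠ v) {W : Finset V}
    (hW : W ⊆ G.neighborFinset u ∩ G.neighborFinset v) : ¬ G.IsResolvingSet W := by
  intro hres
  refine huv (hres u v fun w hw => ?_)
  obtain ⟨huw, hvw⟩ := Finset.mem_inter.1 (hW hw)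
  rw [dist_eq_one_iff_adj.2 ((mem_neighborFinset G u w).1 huw),
    dist_eq_one_iff_adj.2 ((mem_neighborFinset G v w).1 hvw)]

theorem card_commonNeighbors_lt_resolvingNumber [Fintype V] [DecidableEq V] [LocallyFinite G]
    {u v : V} (huv : u ≠ v) :
    (G.neighborFinset u ∩ G.neighborFinset v).card < G.resolvingNumber := by
  by_contra! hle
  obtain ⟨W, hWsub, hWcard⟩ := Finset.exists_subset_card_eq hle
  exact G.not_isResolvingSet_of_subset_commonNeighbors huv hWsub
    (G.isResolvingSet_of_card_eq_resolvingNumber hWcard)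

end SimpleGraph

theorem stmt5_general [Fintype V] [DecidableEq V] (G : SimpleGraph V) [DecidableRel G.Adj]
    (k : ℕ) (hres : G.resolvingNumber = k) :
    ∀ u v : V, u ≠ v → (G.neighborFinset u ∩ G.neighborFinset v).card ≤ k - 1 := by
  intro u v huv
  have := G.card_commonNeighbors_lt_resolvingNumber huv
  omega

theorem stmt5 [Fintype V] [DecidableEq V] (G : SimpleGraph V) [DecidableRel G.Adj]
    (hG : G.Connected) (k : ℕ) (hres : G.resolvingNumber = k) :
    ∀ u v : V, u ≠ v → (G.neighborFinset u ∩ G.neighborFinset v).card ≤ k - 1 :=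
  stmt5_general G k hres
end

section
/- If G is a randomly k-dimensional graph of order n, then every pair {x,y} of distinct vertices of G is resolved by at least n−k+1 vertices of G, i.e. |{v ∈ V(G) : d(v,x) ≠ d(v,y)}| ≥ n−k+1. -/
open SimpleGraph Finset

variable {V : Type*}

/- Fewer than `k` vertices fail to resolve `{x, y}`: any `k` of them would form a basis not
resolving `x` and `y`. So at least `n - k + 1` vertices resolve the pair. When `k > n` the bound is `1`
(truncated subtraction), and `x` itself resolves the pair because `G` is connected. -/

theorem SimpleGraph.card_filter_dist_eq_lt [Fintype V] {G : SimpleGraph V} {k : ℕ}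
    (hres : ∀ W : Finset V, W.card = k → G.IsResolvingSet W) {x y : V} (hxy : x ≠ y) :
    (univ.filter fun w : V => G.dist w x = G.dist w y).card < k := by
  by_contra! hbig
  obtain ⟨W, hWsub, hWcard⟩ := exists_subset_card_eq hbig
  refine hxy (hres W hWcard x y fun w hw => ?_)
  rw [dist_comm, (mem_filter.mp (hWsub hw)).2, dist_comm]

theorem SimpleGraph.Connected.mem_filter_dist_ne [Fintype V] {G : SimpleGraph V}
    (hconn : G.Connected) {x y : V} (hxy : x ≠ y) :
    x ∈ univ.filter fun w : V => G.dist w x ≠ G.dist w y := by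
  simpa using (hconn.pos_dist_of_ne hxy).ne

theorem stmt6_general [Fintype V] (G : SimpleGraph V) (k : ℕ)
    (hG : G.RandomlyKDim k) :
    ∀ x y : V, x ≠ y →
      Fintype.card V - k + 1 ≤
        (Finset.univ.filter (fun w : V => G.dist w x ≠ G.dist w y)).card := by
  intro x y hxy
  obtain ⟨hconn, -, hres⟩ := hG
  have hfew := card_filter_dist_eq_lt hres hxy
  have hresolved := card_pos.mpr ⟨x, hconn.mem_filter_dist_ne hxy⟩
  have hsplit : (univ.filter fun w : V => G.dist w x = G.dist w y).card +
      (univ.filter fun w : V => G.dist w x ≠ G.dist w y).card = Fintype.card V :=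
    card_filter_add_card_filter_not _
  omega

theorem stmt6 [Fintype V] [DecidableEq V] (G : SimpleGraph V) (k : ℕ)
    (hG : G.RandomlyKDim k) :
    ∀ x y : V, x ≠ y →
      Fintype.card V - k + 1 ≤
        (Finset.univ.filter (fun w : V => G.dist w x ≠ G.dist w y)).card :=
  stmt6_general G k hG
end

section
/- If G is a randomly k-dimensional graph of order n, then every vertex v of G resolves at most C(n,2)−k+1 pairs of vertices, i.e. the number of pairs {x,y} with d(v,x) ≠ d(v,y) is at most C(n,2)−k+1. -/
open SimpleGraph Finset

variable {V : Type*}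

namespace SimpleGraph

variable {G : SimpleGraph V}

/-- In a connected graph every vertex resolves each pair it belongs to. -/
theorem Connected.isResolvingSet_insert [DecidableEq V] (hG : G.Connected) (v : V) {W : Finset V}
    (hW : ∀ u w, u ≠ w → G.dist v u = G.dist v w → u ∈ W ∨ w ∈ W) :
    G.IsResolvingSet (insert v W) := by
  intro u w h
  by_contra hne
  have hv : G.dist v u = G.dist v w := by
    rw [dist_comm, h v (mem_insert_self v W), dist_comm]
  rcases hW u w hne hv with hu | hw
  · have := h u (mem_insert_of_mem hu)
    rw [dist_self] at this
    exact (hG.pos_dist_of_ne (Ne.symm hne)).ne this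
  · have := h w (mem_insert_of_mem hw)
    rw [dist_self] at this
    exact (hG.pos_dist_of_ne hne).ne' this

section Pairs

variable [Fintype V]

variable (G) in
noncomputable def resolvedPairs (v : V) : Finset (Finset V) :=
  (univ.powersetCard 2).filter (fun s => ∃ x ∈ s, ∃ y ∈ s, G.dist v x ≠ G.dist v y)

variable (G) in
noncomputable def unresolvedPairs (v : V) : Finset (Finset V) :=
  (univ.powersetCard 2).filter (fun s => ∀ x ∈ s, ∀ y ∈ s, G.dist v x = G.dist v y)

variable (G) in
theorem card_resolvedPairs_add_card_unresolvedPairs (v : V) :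
    (G.resolvedPairs v).card + (G.unresolvedPairs v).card = (Fintype.card V).choose 2 := by
  rw [← card_univ, ← card_powersetCard, ← card_filter_add_card_filter_not
    (s := powersetCard 2 univ) (fun s => ∃ x ∈ s, ∃ y ∈ s, G.dist v x ≠ G.dist v y)]
  simp only [resolvedPairs, unresolvedPairs, not_exists, not_and, not_not]

theorem pair_mem_unresolvedPairs [DecidableEq V] {v u w : V} (hne : u ≠ w)
    (h : G.dist v u = G.dist v w) :
    {u, w} ∈ G.unresolvedPairs v := by
  simp only [unresolvedPairs, mem_filter, mem_powersetCard, subset_univ, true_and,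
    card_pair hne, mem_insert, mem_singleton]
  rintro x (rfl | rfl) y (rfl | rfl) <;> simp [h]

/-- A resolving set is obtained from `v` and one vertex of each pair that `v` does not
resolve. -/
theorem Connected.metricDim_le_card_unresolvedPairs_add_one (hG : G.Connected) (v : V) :
    G.metricDim ≤ (G.unresolvedPairs v).card + 1 := by
  have hnonempty : ∀ s ∈ G.unresolvedPairs v, ∃ x, x ∈ s := fun s hs ↦
    card_pos.1 (by rw [(mem_powersetCard.1 (filter_subset _ _ hs)).2]; omega)
  have : Nonempty V := ⟨v⟩
  classical
  choose! pick hpick using hnonempty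
  have hres : G.IsResolvingSet (insert v ((G.unresolvedPairs v).image pick)) := by
    refine hG.isResolvingSet_insert v fun u w huw h ↦ ?_
    have hmem := pair_mem_unresolvedPairs huw h
    have hpick_mem := hpick _ hmem
    simp only [mem_insert, mem_singleton] at hpick_mem
    rcases hpick_mem with hu | hw
    · exact .inl (hu ▸ mem_image_of_mem pick hmem)
    · exact .inr (hw ▸ mem_image_of_mem pick hmem)
  calc G.metricDim ≤ _ := metricDim_le_card hres
    _ ≤ ((G.unresolvedPairs v).image pick).card + 1 := card_insert_le _ _
    _ ≤ (G.unresolvedPairs v).card + 1 := by gcongr; exact card_image_le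

end Pairs

end SimpleGraph

theorem stmt7_general [Fintype V] (G : SimpleGraph V) (k : ℕ)
    (hG : G.RandomlyKDim k) (v : V) :
    ((Finset.univ.powersetCard 2).filter
        (fun s : Finset V => ∃ x ∈ s, ∃ y ∈ s, G.dist v x ≠ G.dist v y)).card ≤
      (Fintype.card V).choose 2 - k + 1 := by
  obtain ⟨hconn, rfl, -⟩ := hG
  have hdim := hconn.metricDim_le_card_unresolvedPairs_add_one v
  have hsum := G.card_resolvedPairs_add_card_unresolvedPairs v
  change (G.resolvedPairs v).card ≤ _
  omega

theorem stmt7 [Fintype V] [DecidableEq V] (G : SimpleGraph V) (k : ℕ)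
    (hG : G.RandomlyKDim k) (v : V) :
    ((Finset.univ.powersetCard 2).filter
        (fun s : Finset V => ∃ x ∈ s, ∃ y ∈ s, G.dist v x ≠ G.dist v y)).card ≤
      (Fintype.card V).choose 2 - k + 1 :=
  stmt7_general G k hG v
end

section
/- Let n, p₁, p₂, q₁, q₂, r₁, r₂ be positive integers with n = p_i·q_i + r_i and r_i < p_i for i = 1,2. If p₁ < p₂, then (p₁−r₁)·C(q₁,2) + r₁·C(q₁+1,2) ≥ (p₂−r₂)·C(q₂,2) + r₂·C(q₂+1,2). -/
open SimpleGraph Finset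

variable {V : Type*}

/-!
With `q = n / p` and `r = n % p`, `2 * balancedChooseTwoSum n p + n` equals `n * q + r * (q + 1)`.
Enlarging `p` never enlarges `q`; if `q` stays the same, `r` can only shrink, and if `q` drops,
the loss of at least `n` in `n * q` outweighs `r * (q + 1) ≤ n`.
-/

/-- The sum of `C(m, 2)` over the parts `m` of the partition of `n` into `p` parts of sizes
`n / p` and `n / p + 1`. -/
def balancedChooseTwoSum (n p : ℕ) : ℕ :=
  (p - n % p) * (n / p).choose 2 + n % p * (n / p + 1).choose 2

lemma two_mul_choose_two_add_self (q : ℕ) : 2 * q.choose 2 + q = q * q := by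
  have h := Nat.add_one_mul_choose_eq q 1
  rw [Nat.choose_one_right, Nat.choose_succ_succ', Nat.choose_one_right] at h
  linarith

lemma two_mul_choose_two_sum_add {p q r : ℕ} (hr : r ≤ p) :
    2 * ((p - r) * q.choose 2 + r * (q + 1).choose 2) + (p * q + r) =
      (p * q + r) * q + r * (q + 1) := by
  obtain ⟨s, rfl⟩ := Nat.exists_eq_add_of_le hr
  rw [Nat.add_sub_cancel_left]
  have hq := two_mul_choose_two_add_self q
  have hq' := two_mul_choose_two_add_self (q + 1)
  nlinarith

lemma two_mul_balancedChooseTwoSum_add {n p : ℕ} (hp : 0 < p) :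
    2 * balancedChooseTwoSum n p + n = n * (n / p) + n % p * (n / p + 1) := by
  have h := two_mul_choose_two_sum_add (q := n / p) (Nat.mod_lt n hp).le
  rwa [Nat.div_add_mod] at h

lemma mod_mul_div_add_one_le {n p : ℕ} (hp : 0 < p) : n % p * (n / p + 1) ≤ n :=
  calc n % p * (n / p + 1) = n % p * (n / p) + n % p := by ring
    _ ≤ p * (n / p) + n % p := by gcongr; exact (Nat.mod_lt n hp).le
    _ = n := Nat.div_add_mod n p

theorem balancedChooseTwoSum_antitone {n p₁ p₂ : ℕ} (hp₁ : 0 < p₁) (hp : p₁ ≤ p₂) :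
    balancedChooseTwoSum n p₂ ≤ balancedChooseTwoSum n p₁ := by
  have hp₂ : 0 < p₂ := hp₁.trans_le hp
  suffices 2 * balancedChooseTwoSum n p₂ + n ≤ 2 * balancedChooseTwoSum n p₁ + n by omega
  rw [two_mul_balancedChooseTwoSum_add hp₁, two_mul_balancedChooseTwoSum_add hp₂]
  rcases (Nat.div_le_div_left hp hp₁).lt_or_eq with hlt | heq
  · calc n * (n / p₂) + n % p₂ * (n / p₂ + 1) ≤ n * (n / p₂) + n := by
          gcongr; exact mod_mul_div_add_one_le hp₂
      _ = n * (n / p₂ + 1) := by ring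
      _ ≤ n * (n / p₁) := by gcongr; exact hlt
      _ ≤ n * (n / p₁) + n % p₁ * (n / p₁ + 1) := Nat.le_add_right _ _
  · have hmod : n % p₂ ≤ n % p₁ := by
      have h₁ := Nat.div_add_mod n p₁
      have h₂ := Nat.div_add_mod n p₂
      rw [heq] at h₂
      have hmul : p₁ * (n / p₁) ≤ p₂ * (n / p₁) := Nat.mul_le_mul_right _ hp
      omega
    rw [heq]
    gcongr

theorem stmt10_general (n p₁ p₂ q₁ q₂ r₁ r₂ : ℕ)
    (h1 : n = p₁ * q₁ + r₁) (h2 : n = p₂ * q₂ + r₂)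
    (hr₁ : r₁ < p₁) (hr₂ : r₂ < p₂) (hp : p₁ < p₂) :
    (p₂ - r₂) * q₂.choose 2 + r₂ * (q₂ + 1).choose 2 ≤
      (p₁ - r₁) * q₁.choose 2 + r₁ * (q₁ + 1).choose 2 := by
  obtain ⟨rfl, rfl⟩ := (Nat.div_mod_unique (Nat.zero_lt_of_lt hr₁)).mpr
    ⟨(add_comm _ _).trans h1.symm, hr₁⟩
  obtain ⟨rfl, rfl⟩ := (Nat.div_mod_unique (Nat.zero_lt_of_lt hr₂)).mpr
    ⟨(add_comm _ _).trans h2.symm, hr₂⟩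
  exact balancedChooseTwoSum_antitone (Nat.zero_lt_of_lt hr₁) hp.le

theorem stmt10 (n p₁ p₂ q₁ q₂ r₁ r₂ : ℕ)
    (hn : 0 < n) (hp₁ : 0 < p₁) (hp₂ : 0 < p₂) (hq₁ : 0 < q₁) (hq₂ : 0 < q₂)
    (hr₁pos : 0 < r₁) (hr₂pos : 0 < r₂)
    (h1 : n = p₁ * q₁ + r₁) (h2 : n = p₂ * q₂ + r₂)
    (hr₁ : r₁ < p₁) (hr₂ : r₂ < p₂) (hp : p₁ < p₂) :
    (p₂ - r₂) * q₂.choose 2 + r₂ * (q₂ + 1).choose 2 ≤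
      (p₁ - r₁) * q₁.choose 2 + r₁ * (q₁ + 1).choose 2 :=
  stmt10_general n p₁ p₂ q₁ q₂ r₁ r₂ h1 h2 hr₁ hr₂ hp
end

section
/- If G is a randomly k-dimensional graph of order n with diameter d, then k ≥ (n−1)/d. -/
/-!
Count the triples `(u, v, w)` with `w ≠ u` and `d(u, w) = d(v, w)`. For `v ≠ u` fewer than `k`
vertices `w` qualify, since any `k` of them would resolve `u` from `v`; with the `n - 1` triples
`(u, u, w)` this gives at most `n (n - 1) k` triples. For a fixed `w`, the other `n - 1` vertices
fall into the `d` distance layers `1, …, d` around `w`, and every pair inside a layer qualifies, so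
by Cauchy–Schwarz there are at least `(n - 1)² / d` such pairs. Hence `n (n - 1)² ≤ d n (n - 1) k`.
-/

open SimpleGraph Finset

variable {V : Type*}

namespace Finset

variable {ι κ : Type*} [DecidableEq κ]

theorem sum_card_fiber_eq_sum_sq (s : Finset ι) {t : Finset κ} {f : ι → κ}
    (hf : (s : Set ι).MapsTo f t) :
    ∑ x ∈ s, #{y ∈ s | f y = f x} = ∑ i ∈ t, #{y ∈ s | f y = i} ^ 2 := by
  rw [← sum_fiberwise_of_maps_to hf]
  refine sum_congr rfl fun i _ => ?_
  rw [sum_congr rfl fun x hx => by rw [(mem_filter.mp hx).2], sum_const, smul_eq_mul, sq]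

theorem sq_card_le_card_mul_sum_card_fiber (s : Finset ι) {t : Finset κ} {f : ι → κ}
    (hf : (s : Set ι).MapsTo f t) :
    #s ^ 2 ≤ #t * ∑ x ∈ s, #{y ∈ s | f y = f x} := by
  rw [sum_card_fiber_eq_sum_sq s hf, card_eq_sum_card_fiberwise hf]
  exact sq_sum_le_card_mul_sum_sq

end Finset

namespace SimpleGraph

variable [Fintype V] {G : SimpleGraph V}

theorem card_filter_dist_eq_lt_s11 {k : ℕ} (hres : ∀ W : Finset V, #W = k → G.IsResolvingSet W)
    {u v : V} (huv : u ≠ v) : #{w | G.dist u w = G.dist v w} < k := by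
  by_contra! hk
  obtain ⟨W, hWsub, hWcard⟩ := exists_subset_card_eq hk
  exact huv <| hres W hWcard u v fun w hw => (mem_filter.mp (hWsub hw)).2

theorem sum_card_filter_ne_dist_eq_le [DecidableEq V] {k : ℕ}
    (hres : ∀ W : Finset V, #W = k → G.IsResolvingSet W) (u : V) :
    ∑ v, #{w | w ≠ u ∧ G.dist u w = G.dist v w} ≤ (Fintype.card V - 1) * k := by
  have hcard : #(univ.erase u) = Fintype.card V - 1 := by
    rw [card_erase_of_mem (mem_univ u), card_univ]
  have hdiag : #{w | w ≠ u ∧ G.dist u w = G.dist u w} = Fintype.card V - 1 := by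
    rw [← hcard]; congr 1; ext w; simp
  -- The diagonal term `v = u` is spread as `+ 1` over the `n - 1` other `v`, so that no `k - 1`
  -- (truncated in `ℕ`) is needed.
  calc ∑ v, #{w | w ≠ u ∧ G.dist u w = G.dist v w}
      = ∑ v ∈ univ.erase u, (#{w | w ≠ u ∧ G.dist u w = G.dist v w} + 1) := by
        rw [← add_sum_erase _ _ (mem_univ u), hdiag, sum_add_distrib, sum_const, hcard,
          smul_eq_mul, mul_one, add_comm]
    _ ≤ ∑ v ∈ univ.erase u, k := by
        refine sum_le_sum fun v hv => ?_
        have hlt := card_filter_dist_eq_lt_s11 hres (ne_of_mem_erase hv).symm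
        have hsub : #{w | w ≠ u ∧ G.dist u w = G.dist v w} ≤ #{w | G.dist u w = G.dist v w} :=
          card_le_card <| monotone_filter_right _ fun _ _ h => h.2
        omega
    _ = (Fintype.card V - 1) * k := by rw [sum_const, hcard, smul_eq_mul]

theorem sq_card_sub_one_le_diam_mul_sum [DecidableEq V] (hconn : G.Connected) (w : V) :
    (Fintype.card V - 1) ^ 2 ≤ G.diam * ∑ u, #{v | w ≠ u ∧ G.dist u w = G.dist v w} := by
  have : Nonempty V := hconn.nonempty
  have hmaps : ((univ.erase w : Finset V) : Set V).MapsTo (G.dist · w) (Icc 1 G.diam) :=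
    fun v hv => mem_Icc.mpr ⟨hconn.pos_dist_of_ne (ne_of_mem_erase hv),
      G.dist_le_diam (G.connected_iff_ediam_ne_top.mp hconn)⟩
  have hfiber := sq_card_le_card_mul_sum_card_fiber _ hmaps
  rw [card_erase_of_mem (mem_univ w), card_univ, Nat.card_Icc, Nat.add_sub_cancel] at hfiber
  refine hfiber.trans <| Nat.mul_le_mul_left _ <|
    (sum_le_sum fun u hu => card_le_card ?_).trans (sum_le_sum_of_subset (subset_univ _))
  intro v hv
  simp only [mem_filter, mem_univ, true_and] at hv ⊢
  exact ⟨(ne_of_mem_erase hu).symm, hv.2.symm⟩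

theorem card_sub_one_le_diam_mul [DecidableEq V] {k : ℕ} (hconn : G.Connected)
    (hres : ∀ W : Finset V, #W = k → G.IsResolvingSet W) :
    Fintype.card V - 1 ≤ G.diam * k := by
  set n := Fintype.card V
  have hcount : ∑ u, ∑ v, #{w | w ≠ u ∧ G.dist u w = G.dist v w}
      = ∑ w, ∑ u, #{v | w ≠ u ∧ G.dist u w = G.dist v w} := by
    simp only [card_filter]
    exact (sum_congr rfl fun _ _ => sum_comm).trans sum_comm
  have key : n * (n - 1) ^ 2 ≤ G.diam * (n * ((n - 1) * k)) :=
    calc n * (n - 1) ^ 2 = ∑ _w : V, (n - 1) ^ 2 := by rw [sum_const, card_univ, smul_eq_mul]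
      _ ≤ ∑ w, G.diam * ∑ u, #{v | w ≠ u ∧ G.dist u w = G.dist v w} :=
        sum_le_sum fun w _ => sq_card_sub_one_le_diam_mul_sum hconn w
      _ = G.diam * ∑ u, ∑ v, #{w | w ≠ u ∧ G.dist u w = G.dist v w} := by
        rw [hcount, mul_sum]
      _ ≤ G.diam * ∑ _u : V, (n - 1) * k :=
        Nat.mul_le_mul_left _ <| sum_le_sum fun u _ => sum_card_filter_ne_dist_eq_le hres u
      _ = G.diam * (n * ((n - 1) * k)) := by rw [sum_const, card_univ, smul_eq_mul]
  rcases Nat.lt_or_ge n 2 with hn | hn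
  · omega
  · have hpos : 0 < n * (n - 1) := Nat.mul_pos (by omega) (by omega)
    refine Nat.le_of_mul_le_mul_left ?_ hpos
    calc n * (n - 1) * (n - 1) = n * (n - 1) ^ 2 := by ring
      _ ≤ _ := key
      _ = n * (n - 1) * (G.diam * k) := by ring

end SimpleGraph

theorem stmt11 [Fintype V] (G : SimpleGraph V) (k : ℕ)
    (hG : G.RandomlyKDim k) :
    ((Fintype.card V : ℚ) - 1) / (G.diam : ℚ) ≤ (k : ℚ) := by
  classical
  obtain ⟨hconn, -, hres⟩ := hG
  have hbound : ((Fintype.card V - 1 : ℕ) : ℚ) ≤ ((G.diam * k : ℕ) : ℚ) :=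
    Nat.cast_le.mpr (card_sub_one_le_diam_mul hconn hres)
  rw [Nat.cast_sub (Fintype.card_pos_iff.mpr hconn.nonempty), Nat.cast_mul, Nat.cast_one] at hbound
  rcases Nat.eq_zero_or_pos G.diam with hd | hd
  · rw [hd, Nat.cast_zero, div_zero]; positivity
  · rw [div_le_iff₀ (by exact_mod_cast hd)]; linarith
end

section
/- If S and T are distinct (k−1)-subsets of vertices of a randomly k-dimensional graph G, then there is no pair {x,y} of distinct vertices that is unresolved by both S and T; that is, every pair of distinct vertices of G is resolved by some vertex of S or some vertex of T whenever S ≠ T. -/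
open SimpleGraph Finset

variable {V : Type*}

theorem Finset.card_lt_card_union_of_card_eq_of_ne {α : Type*} [DecidableEq α]
    {s t : Finset α} (hcard : #s = #t) (hne : s ≠ t) : #s < #(s ∪ t) := by
  refine card_lt_card (left_lt_sup.mpr fun hts => hne ?_)
  exact (eq_of_subset_of_card_le hts hcard.le).symm

theorem SimpleGraph.IsResolvingSet.exists_dist_ne {G : SimpleGraph V} {W : Finset V}
    (hW : G.IsResolvingSet W) {x y : V} (hxy : x ≠ y) : ∃ w ∈ W, G.dist w x ≠ G.dist w y := by
  by_contra! h
  exact hxy (hW x y fun w hw => by rw [dist_comm, h w hw, dist_comm])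

-- Two distinct `(k-1)`-sets together contain at least `k` vertices, hence a basis.
theorem stmt13 [Fintype V] (G : SimpleGraph V) (k : ℕ)
    (hG : G.RandomlyKDim k) (S T : Finset V)
    (hS : S.card = k - 1) (hT : T.card = k - 1) (hST : S ≠ T) :
    ∀ x y : V, x ≠ y → ∃ w, (w ∈ S ∨ w ∈ T) ∧ G.dist w x ≠ G.dist w y := by
  classical
  intro x y hxy
  have hk : k ≤ #(S ∪ T) := by
    have := card_lt_card_union_of_card_eq_of_ne (hS.trans hT.symm) hST
    omega
  obtain ⟨W, hWST, hWk⟩ := exists_subset_card_eq hk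
  obtain ⟨w, hwW, hw⟩ := (hG.2.2 W hWk).exists_dist_ne hxy
  exact ⟨w, mem_union.mp (hWST hwW), hw⟩
end

section
/- If G is a connected graph with resolving number res(G) = k, then the maximum degree of G satisfies Δ(G) ≤ 2^{k−1} + k − 1. -/
/-!
Fix a vertex `v` of degree at least `k` and `k - 1` of its neighbours `S`; the `k`-set
`{v} ∪ S` resolves `G`. Every other neighbour of `v` is at distance `1` from `v` and at
distance `1` or `2` from each vertex of `S`, so it is determined by the subset of `S` at
distance `2` from it. Hence `v` has at most `2 ^ (k - 1)` neighbours outside `S`.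
-/

open SimpleGraph Finset

variable {V : Type*}

namespace SimpleGraph

variable {G : SimpleGraph V}

lemma isResolvingSet_univ [Fintype V] (hG : G.Connected) : G.IsResolvingSet univ := by
  intro u v h
  by_contra huv
  have hdist := h v (mem_univ v)
  rw [dist_self] at hdist
  exact (hG.pos_dist_of_ne huv).ne' hdist

lemma forall_card_eq_resolvingNumber_isResolvingSet [Fintype V] (hG : G.Connected) :
    ∀ W : Finset V, #W = G.resolvingNumber → G.IsResolvingSet W :=
  Nat.sInf_mem (s := {k | ∀ W : Finset V, W.card = k → G.IsResolvingSet W})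
    ⟨Fintype.card V, fun W hW => eq_univ_of_card W hW ▸ isResolvingSet_univ hG⟩

lemma IsResolvingSet.subsingleton_of_empty (h : G.IsResolvingSet ∅) : Subsingleton V :=
  ⟨fun u v => h u v (by simp)⟩

lemma dist_eq_one_or_two_of_adj_of_adj {u v w : V} (hu : G.Adj v u) (hw : G.Adj v w)
    (huw : u ≠ w) : G.dist u w = 1 ∨ G.dist u w = 2 := by
  have hpos : 0 < G.dist u w := (hu.symm.reachable.trans hw.reachable).pos_dist_of_ne huw
  have hle : G.dist u w ≤ 2 :=
    calc G.dist u w ≤ G.dist u v + G.dist v w := hu.symm.reachable.dist_triangle_left w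
      _ = 2 := by rw [dist_eq_one_iff_adj.mpr hu.symm, dist_eq_one_iff_adj.mpr hw]
  omega

lemma IsResolvingSet.card_neighborFinset_sdiff_le [DecidableEq V] {v : V}
    [Fintype (G.neighborSet v)] {S : Finset V} (hS : S ⊆ G.neighborFinset v)
    (hres : G.IsResolvingSet (insert v S)) : #(G.neighborFinset v \ S) ≤ 2 ^ #S := by
  have hdist_center {u} (hu : u ∈ G.neighborFinset v \ S) : G.dist u v = 1 :=
    dist_eq_one_iff_adj.mpr ((mem_neighborFinset ..).mp (mem_sdiff.mp hu).1).symm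
  have hdist {u w} (hu : u ∈ G.neighborFinset v \ S) (hw : w ∈ S) :
      G.dist u w = 1 ∨ G.dist u w = 2 := by
    rw [mem_sdiff, mem_neighborFinset] at hu
    exact dist_eq_one_or_two_of_adj_of_adj hu.1 ((mem_neighborFinset ..).mp (hS hw))
      (ne_of_mem_of_not_mem hw hu.2).symm
  have hinj : Set.InjOn (fun u => {w ∈ S | G.dist u w = 2}) ↑(G.neighborFinset v \ S) := by
    intro u₁ hu₁ u₂ hu₂ heq
    refine hres u₁ u₂ fun w hw => ?_
    rcases mem_insert.mp hw with rfl | hwS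
    · rw [hdist_center hu₁, hdist_center hu₂]
    · have hiff := Finset.ext_iff.mp heq w
      simp only [mem_filter, hwS, true_and] at hiff
      have := hdist hu₁ hwS
      have := hdist hu₂ hwS
      omega
  simpa using card_le_card_of_injOn _ (fun u _ => mem_powerset.mpr (filter_subset _ S)) hinj

lemma degree_le_of_forall_card_eq_isResolvingSet {k : ℕ}
    (hk : ∀ W : Finset V, #W = k → G.IsResolvingSet W) (v : V) [Fintype (G.neighborSet v)] :
    G.degree v ≤ 2 ^ (k - 1) + k - 1 := by
  classical
  obtain rfl | hkpos := Nat.eq_zero_or_pos k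
  · have := (hk ∅ rfl).subsingleton_of_empty
    simp [degree]
  have hpow : 1 ≤ 2 ^ (k - 1) := Nat.one_le_two_pow
  by_cases hsmall : G.degree v ≤ k - 1
  · omega
  obtain ⟨S, hS, hScard⟩ := exists_subset_card_eq (s := G.neighborFinset v) (n := k - 1)
    (by rw [card_neighborFinset_eq_degree]; omega)
  have hvS : v ∉ S := fun hv => G.irrefl ((mem_neighborFinset ..).mp (hS hv))
  have hres : G.IsResolvingSet (insert v S) := hk _ (by rw [card_insert_of_notMem hvS]; omega)
  have hout := hScard ▸ hres.card_neighborFinset_sdiff_le hS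
  have hsplit := card_sdiff_add_card_inter (G.neighborFinset v) S
  rw [inter_eq_right.mpr hS, card_neighborFinset_eq_degree] at hsplit
  omega

end SimpleGraph

theorem stmt14 [Fintype V] (G : SimpleGraph V) [DecidableRel G.Adj]
    (hG : G.Connected) (k : ℕ) (hres : G.resolvingNumber = k) :
    G.maxDegree ≤ 2 ^ (k - 1) + k - 1 := by
  subst hres
  exact G.maxDegree_le_of_forall_degree_le _
    fun v => degree_le_of_forall_card_eq_isResolvingSet
      (forall_card_eq_resolvingNumber_isResolvingSet hG) v
end
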